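/- arXiv:math/0112022 — 7 statements merged into one kernel-verified Lean document; each statement's English description precedes it below -/
import Mathlib

section
/- Let z_1,...,z_d be distinct nonzero complex numbers with z_1^n = z_2^n = ... = z_d^n, where n > d ≥ 1. Then for every m ≥ 0, H_{m+n}(z_1,...,z_d) = z_1^n · H_m(z_1,...,z_d), where H denotes the complete homogeneous symmetric polynomial. -/
noncomputable section

/-- Complete homogeneous symmetric polynomial of degree `m` in `d` variables. -/
def Hpoly (d m : ℕ) (z : Fin d → ℂ) : ℂ :=
  ∑ α ∈ Finset.Nat.antidiagonalTuple d m, ∏ i, z i ^ α i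

/-!
For distinct nodes, `H_k(z_1, …, z_d) = ∑ᵢ zᵢ ^ (k + d - 1) / ∏_{j ≠ i} (zᵢ - zⱼ)`, i.e. `H_k` is the
divided difference of `X ^ (k + d - 1)`. By induction on `d`: splitting off `z_1` writes `H_k` as
`∑_{a + b = k} z_1 ^ a H_b(z_2, …, z_d)`, and the geometric sums that appear telescope against the
vanishing of the divided differences of `X ^ r` for `r < d - 1`. With this formula, `zᵢ ^ n = z_1 ^ n`
pulls `z_1 ^ n` out of every term of `H_{m+n}`.
-/

open Finset Lagrange

theorem Finset.Nat.sum_antidiagonalTuple_succ {M : Type*} [AddCommMonoid M] (k n : ℕ)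
    (f : (Fin (k + 1) → ℕ) → M) :
    ∑ α ∈ antidiagonalTuple (k + 1) n, f α =
      ∑ p ∈ antidiagonal n, ∑ α ∈ antidiagonalTuple k p.2, f (Fin.cons p.1 α) := by
  change ((List.Nat.antidiagonalTuple (k + 1) n).map f).sum =
    ((List.Nat.antidiagonal n).map fun p =>
      ((List.Nat.antidiagonalTuple k p.2).map fun α => f (Fin.cons p.1 α)).sum).sum
  rw [List.Nat.antidiagonalTuple, List.flatMap, List.map_flatten, List.sum_flatten]
  simp [Function.comp_def]

theorem geom_sum₂_antidiagonal_mul {R : Type*} [CommRing R] (x y : R) (k : ℕ) :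
    (∑ p ∈ antidiagonal k, x ^ p.1 * y ^ p.2) * (x - y) = x ^ (k + 1) - y ^ (k + 1) := by
  rw [Nat.sum_antidiagonal_eq_sum_range_succ_mk]
  exact geom_sum₂_mul x y (k + 1)

theorem Lagrange.nodalWeight_univ_succ {F : Type*} [Field F] {d : ℕ} (z : Fin (d + 1) → F)
    (i : Fin d) :
    nodalWeight univ z i.succ = (z i.succ - z 0)⁻¹ * nodalWeight univ (Fin.tail z) i := by
  rw [nodalWeight, nodalWeight, Fin.univ_succ, erase_cons_of_ne _ (Fin.succ_ne_zero i).symm,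
    prod_cons]
  erw [← map_erase, prod_map]
  rfl

theorem Lagrange.sum_pow_mul_nodalWeight_eq_zero {F ι : Type*} [Field F] [DecidableEq ι]
    {s : Finset ι} {v : ι → F} (hvs : Set.InjOn v s) {r : ℕ} (hr : r + 1 < #s) :
    ∑ i ∈ s, v i ^ r * nodalWeight s v i = 0 := by
  have hX : (Polynomial.X ^ r : Polynomial F) = interpolate s v (fun i => v i ^ r) :=
    eq_interpolate_of_eval_eq _ hvs
      (by rw [Polynomial.degree_X_pow]; exact_mod_cast (by omega : r < #s)) (by simp)
  have hcoeff := congrArg (Polynomial.coeff · (#s - 1)) hX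
  simp only [Polynomial.coeff_X_pow, if_neg (by omega : #s - 1 ≠ r), interpolate_apply,
    Polynomial.finsetSum_coeff, Polynomial.coeff_C_mul] at hcoeff
  rw [hcoeff]
  refine sum_congr rfl fun i hi => ?_
  rw [← natDegree_basis hvs hi, ← Polynomial.leadingCoeff, leadingCoeff_basis hvs hi, nodalWeight,
    prod_inv_distrib]

theorem Hpoly_succ (d m : ℕ) (z : Fin (d + 1) → ℂ) :
    Hpoly (d + 1) m z = ∑ p ∈ antidiagonal m, z 0 ^ p.1 * Hpoly d p.2 (Fin.tail z) := by
  simp only [Hpoly, Nat.sum_antidiagonalTuple_succ, Fin.prod_univ_succ, Fin.cons_zero,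
    Fin.cons_succ, mul_sum]
  rfl

theorem Hpoly_eq_sum_pow_mul_nodalWeight (d : ℕ) (z : Fin (d + 1) → ℂ)
    (hz : Function.Injective z) (k : ℕ) :
    Hpoly (d + 1) k z = ∑ i, z i ^ (k + d) * nodalWeight univ z i := by
  induction d generalizing k with
  | zero => simp [Hpoly, Nat.antidiagonalTuple_one, nodalWeight]
  | succ d ih =>
    have hw (i : Fin (d + 1)) :
        nodalWeight univ (Fin.tail z) i = (z i.succ - z 0) * nodalWeight univ z i.succ := by
      rw [nodalWeight_univ_succ, mul_inv_cancel_left₀ (sub_ne_zero.2 (hz.ne (Fin.succ_ne_zero i)))]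
    have hvanish : z 0 ^ d * nodalWeight univ z 0 +
        ∑ i : Fin (d + 1), z i.succ ^ d * nodalWeight univ z i.succ = 0 := by
      rw [← Fin.sum_univ_succ (fun i => z i ^ d * nodalWeight univ z i)]
      exact sum_pow_mul_nodalWeight_eq_zero hz.injOn (by simp)
    calc Hpoly (d + 2) k z
        = ∑ i : Fin (d + 1), (∑ p ∈ antidiagonal k, z 0 ^ p.1 * z i.succ ^ p.2) *
            (z 0 - z i.succ) * -(z i.succ ^ d * nodalWeight univ z i.succ) := by
          rw [Hpoly_succ]
          simp_rw [ih (Fin.tail z) (hz.comp (Fin.succ_injective _)), hw, mul_sum, sum_mul]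
          rw [sum_comm]
          refine sum_congr rfl fun i _ => sum_congr rfl fun p _ => ?_
          rw [Fin.tail, pow_add]
          ring
      _ = ∑ i : Fin (d + 1), (z i.succ ^ (k + d + 1) * nodalWeight univ z i.succ -
            z 0 ^ (k + 1) * (z i.succ ^ d * nodalWeight univ z i.succ)) := by
          refine sum_congr rfl fun i _ => ?_
          rw [geom_sum₂_antidiagonal_mul]
          ring
      _ = ∑ i, z i ^ (k + (d + 1)) * nodalWeight univ z i := by
          rw [sum_sub_distrib, ← mul_sum,
            Fin.sum_univ_succ (fun i => z i ^ (k + (d + 1)) * nodalWeight univ z i)]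
          linear_combination (- z 0 ^ (k + 1)) * hvanish

/-- If `z_1,…,z_d` are distinct nonzero complex numbers with equal `n`-th powers
(`n > d ≥ 1`), then `H_{m+n}(z) = z_1^n · H_m(z)` for every `m ≥ 0`. -/
theorem stmt2 (d n : ℕ) (hd : 1 ≤ d) (z : Fin d → ℂ)
    (hinj : Function.Injective z)
    (hpow : ∀ i j, z i ^ n = z j ^ n) (m : ℕ) :
    Hpoly d (m + n) z = z ⟨0, by omega⟩ ^ n * Hpoly d m z := by
  obtain ⟨d, rfl⟩ := Nat.exists_eq_add_one.mpr hd
  rw [Hpoly_eq_sum_pow_mul_nodalWeight d z hinj, Hpoly_eq_sum_pow_mul_nodalWeight d z hinj, mul_sum]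
  refine sum_congr rfl fun i _ => ?_
  rw [← hpow i, add_right_comm, pow_add]
  ring
end
end

section
/- Let z_1,...,z_d be distinct complex numbers, all nonzero, with z_1^n = ... = z_d^n, where n = c + d and c ≥ 1. Then the complete homogeneous symmetric polynomials H_{c+1}(z_1,...,z_d), H_{c+2}(z_1,...,z_d), ..., H_{n-1}(z_1,...,z_d) all vanish. -/
noncomputable section

/-!
The generating function of the `H_m(z)` is `∑ H_m t^m = ∏ 1 / (1 - z_i t)`. The `z_i` are `d`
distinct roots of `X ^ n - w`, where `w` is the common value of the `z_i ^ n`, so `∏ (X - z_i)` divides it with a cofactor of degree `c`;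
reversing both sides gives `∏ (1 - z_i t) * R(t) = 1 - w t ^ n` with `deg R ≤ c`. Hence
`∑ H_m t^m = R(t) / (1 - w t ^ n) = R(t) (1 + w t ^ n + ⋯)` has no terms of degree `c + 1, …, n - 1`.
-/

open Finset Polynomial

theorem PowerSeries.one_sub_C_mul_X_mul_mk_pow {R : Type*} [CommRing R] (a : R) :
    (1 - C a * X) * mk (a ^ ·) = 1 := by
  simpa [map_sub, rescale_X, rescale_mk, mul_comm] using
    congrArg (rescale a) (mk_one_mul_one_sub_eq_one R)

theorem Hpoly_eq_coeff_prod_mk_pow (d m : ℕ) (z : Fin d → ℂ) :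
    Hpoly d m z = PowerSeries.coeff m (∏ i, PowerSeries.mk (z i ^ ·)) := by
  classical
  rw [PowerSeries.coeff_prod, Hpoly, ← piAntidiag_univ_fin_eq_antidiagonalTuple, finsuppAntidiag,
    sum_map, ← sum_attach]
  simp

theorem Polynomial.reflect_prod_X_sub_C {R ι : Type*} [CommRing R] [Nontrivial R]
    (s : Finset ι) (z : ι → R) :
    reflect #s (∏ i ∈ s, (X - C (z i))) = ∏ i ∈ s, (1 - C (z i) * X) := by
  classical
  induction s using Finset.induction_on with
  | empty => simp
  | insert a s has ih =>
    rw [prod_insert has, prod_insert has, card_insert_of_notMem has, add_comm,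
      reflect_mul _ _ (natDegree_X_sub_C_le _) (natDegree_finsetProd_X_sub_C_eq_card s z).le, ih]
    congr 1
    simp [reflect_sub]

section

variable {K ι : Type*} [Field K] [Fintype ι] {z : ι → K} {n : ℕ} {w : K}

theorem Polynomial.prod_X_sub_C_dvd_X_pow_sub_C (hz : Function.Injective z)
    (hw : ∀ i, z i ^ n = w) : ∏ i, (X - C (z i)) ∣ X ^ n - C w :=
  prod_dvd_of_coprime ((pairwise_coprime_X_sub_C hz).set_pairwise _) fun i _ ↦
    dvd_iff_isRoot.mpr (by simp [hw])

theorem Polynomial.exists_prod_one_sub_C_mul_X_mul_eq (hz : Function.Injective z) {c : ℕ}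
    (hn : n = c + Fintype.card ι) (hw : ∀ i, z i ^ n = w) :
    ∃ R : K[X], R.natDegree ≤ c ∧ (∏ i, (1 - C (z i) * X)) * R = 1 - C w * X ^ n := by
  obtain ⟨Q, hQ⟩ := prod_X_sub_C_dvd_X_pow_sub_C hz hw
  have hQc : Q.natDegree ≤ c := by
    rcases eq_or_ne Q 0 with rfl | hQ0
    · simp
    have hdeg := (monic_prod_X_sub_C z univ).natDegree_mul' hQ0
    rw [← hQ, natDegree_X_pow_sub_C, natDegree_finsetProd_X_sub_C_eq_card, card_univ] at hdeg
    omega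
  refine ⟨reflect c Q, natDegree_reflect_le.trans (max_le le_rfl hQc), ?_⟩
  calc (∏ i, (1 - C (z i) * X)) * reflect c Q = reflect n (X ^ n - C w) := by
        rw [hQ, hn, add_comm, ← card_univ,
          reflect_mul _ _ (natDegree_finsetProd_X_sub_C_eq_card _ _).le hQc, reflect_prod_X_sub_C]
    _ = 1 - C w * X ^ n := by simp [reflect_sub, revAt_le]

theorem PowerSeries.coeff_prod_mk_pow_eq_zero (hz : Function.Injective z) {c m : ℕ}
    (hn : n = c + Fintype.card ι) (hw : ∀ i, z i ^ n = w) (hcm : c < m) (hmn : m < n) :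
    coeff m (∏ i, mk (z i ^ ·)) = 0 := by
  obtain ⟨R, hRc, hR⟩ := Polynomial.exists_prod_one_sub_C_mul_X_mul_eq hz hn hw
  have hinv : (∏ i, (1 - C (z i) * X)) * ∏ i, mk (z i ^ ·) = 1 := by
    rw [← prod_mul_distrib]
    exact prod_eq_one fun i _ ↦ one_sub_C_mul_X_mul_mk_pow (z i)
  have hR_eq : (R : PowerSeries K) = (1 - C w * X ^ n) * ∏ i, mk (z i ^ ·) := by
    have hR' := congrArg Polynomial.coeToPowerSeries.ringHom hR
    simp only [map_mul, map_prod, map_sub, map_one, map_pow,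
      Polynomial.coeToPowerSeries.ringHom_apply, Polynomial.coe_C, Polynomial.coe_X] at hR'
    rw [← hR', mul_right_comm, hinv, one_mul]
  have hcoeff := congrArg (coeff m) hR_eq
  rw [Polynomial.coeff_coe, Polynomial.coeff_eq_zero_of_natDegree_lt (hRc.trans_lt hcm), sub_mul,
    map_sub, one_mul, mul_assoc, coeff_C_mul, coeff_X_pow_mul', if_neg (by omega)] at hcoeff
  simpa using hcoeff.symm

end

theorem stmt3_general (c d n : ℕ) (hn : n = c + d)
    (z : Fin d → ℂ) (hinj : Function.Injective z)
    (hpow : ∀ i j, z i ^ n = z j ^ n) :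
    ∀ m, c + 1 ≤ m → m ≤ n - 1 → Hpoly d m z = 0 := by
  intro m hcm hmn
  obtain ⟨w, hw⟩ : ∃ w, ∀ i, z i ^ n = w := by
    rcases isEmpty_or_nonempty (Fin d) with _ | ⟨⟨j⟩⟩
    · exact ⟨0, isEmptyElim⟩
    · exact ⟨z j ^ n, fun i ↦ hpow i j⟩
  rw [Hpoly_eq_coeff_prod_mk_pow]
  exact PowerSeries.coeff_prod_mk_pow_eq_zero hinj (by rwa [Fintype.card_fin]) hw
    (by omega) (by omega)

/-- If `z_1,…,z_d` are pairwise distinct nonzero complex numbers with equal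
`n`-th powers, `n = c + d`, `c, d ≥ 1`, then `H_{c+1}(z) = ⋯ = H_{n-1}(z) = 0`. -/
theorem stmt3 (c d n : ℕ) (hc : 1 ≤ c) (hd : 1 ≤ d) (hn : n = c + d)
    (z : Fin d → ℂ) (hinj : Function.Injective z) (hne : ∀ i, z i ≠ 0)
    (hpow : ∀ i j, z i ^ n = z j ^ n) :
    ∀ m, c + 1 ≤ m → m ≤ n - 1 → Hpoly d m z = 0 :=
  stmt3_general c d n hn z hinj hpow
end
end

section
/- Let z_1,...,z_d be complex numbers (d ≥ 2, n = c+d, c ≥ 1) such that H_{c+1}(z_1,...,z_d) = H_{c+2}(z_1,...,z_d) = ... = H_{n-1}(z_1,...,z_d) = 0. Then z_1^n = z_2^n = ... = z_d^n, and moreover if some z_i ≠ 0, then all z_j are nonzero and pairwise distinct. -/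
noncomputable section

/-!
Put `P = ∏ i, (1 - z i X)` and `G = ∏ i, (1 - z i X)⁻¹ = ∑ m, H_m X ^ m`. Since `H_m = 0`
for `c < m < n`, the truncation `Q` of `G` to degree `c` satisfies `P Q ≡ P G = 1 (mod X ^ n)`,
and `deg (P Q) ≤ n`, so `P Q = 1 + a X ^ n`. Reversing coefficients gives
`∏ i, (X - z i) ∣ X ^ n + a`, so `z i ^ n = -a` for every `i`. If some `z i ≠ 0` then
`a ≠ 0`, and `X ^ n + a` is separable, which forces the `z i` to be distinct.
-/

open Polynomial

namespace PowerSeries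

variable {R : Type*} [CommRing R]

theorem one_sub_C_mul_X_mul_mk_pow_s4 (w : R) : (1 - C w * X) * mk (w ^ ·) = 1 := by
  have h := congrArg (rescale w) (mk_one_mul_one_sub_eq_one R)
  rw [map_mul, map_sub, map_one, rescale_X, rescale_mk, mul_comm] at h
  simpa using h

theorem trunc_coe_trunc_of_coeff_eq_zero {G : R⟦X⟧} {m n : ℕ}
    (hG : ∀ k, m ≤ k → k < n → coeff k G = 0) :
    trunc n (trunc m G : R⟦X⟧) = trunc n G := by
  ext k
  simp only [coeff_trunc, Polynomial.coeff_coe]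
  split_ifs with hn hm
  · rfl
  · exact (hG k (by omega) hn).symm
  · rfl

theorem exists_mul_trunc_eq_one_add_C_mul_X_pow {P : R[X]} {G : R⟦X⟧} {c d : ℕ}
    (hP : P.natDegree ≤ d) (hPG : (P : R⟦X⟧) * G = 1)
    (hG : ∀ m, c < m → m < c + d → coeff m G = 0) (hcd : c + d ≠ 0) :
    ∃ a, P * trunc (c + 1) G = 1 + Polynomial.C a * Polynomial.X ^ (c + d) := by
  have hlow : trunc (c + d) (P * trunc (c + 1) G : R⟦X⟧) = 1 := by
    obtain ⟨n, hn⟩ := Nat.exists_eq_succ_of_ne_zero hcd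
    rw [← trunc_mul_trunc, trunc_coe_trunc_of_coeff_eq_zero hG,
      trunc_mul_trunc, hPG, hn, trunc_one]
  have hdeg : (P * trunc (c + 1) G).natDegree ≤ c + d :=
    natDegree_mul_le.trans (by have := natDegree_trunc_lt G c; omega)
  refine ⟨(P * trunc (c + 1) G).coeff (c + d), ?_⟩
  ext k
  rcases lt_trichotomy k (c + d) with hk | rfl | hk
  · have := congrArg (Polynomial.coeff · k) hlow
    simp only [coeff_trunc, if_pos hk] at this
    rw [← Polynomial.coeff_coe, Polynomial.coe_mul, this]
    simp [Polynomial.coeff_one, Polynomial.coeff_X_pow, hk.ne]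
  · simp [Polynomial.coeff_one]
    omega
  · simp [coeff_eq_zero_of_natDegree_lt (hdeg.trans_lt hk), Polynomial.coeff_one,
      Polynomial.coeff_X_pow, hk.ne', (Nat.zero_le _).trans_lt hk |>.ne']

end PowerSeries

namespace Polynomial

section CommRing

variable {R : Type*} [CommRing R]

theorem natDegree_prod_one_sub_C_mul_X_le {ι : Type*} (s : Finset ι) (z : ι → R) :
    (∏ i ∈ s, (1 - C (z i) * X)).natDegree ≤ s.card := by
  have h : ∀ i ∈ s, (1 - C (z i) * X).natDegree ≤ 1 := fun i _ => by compute_degree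
  simpa using (natDegree_prod_le s _).trans (Finset.sum_le_card_nsmul s _ 1 h)

theorem reflect_prod_one_sub_C_mul_X {ι : Type*} [DecidableEq ι] (s : Finset ι) (z : ι → R) :
    reflect s.card (∏ i ∈ s, (1 - C (z i) * X)) = ∏ i ∈ s, (X - C (z i)) := by
  induction s using Finset.induction_on with
  | empty => simp
  | insert i s hi ih =>
    rw [Finset.prod_insert hi, Finset.prod_insert hi, Finset.card_insert_of_notMem hi, add_comm,
      reflect_mul _ _ _ (natDegree_prod_one_sub_C_mul_X_le s z), ih]
    · simp [reflect_sub, reflect_C_mul, reflect_one]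
    · compute_degree

theorem reflect_one_add_C_mul_X_pow (a : R) (n : ℕ) :
    reflect n (1 + C a * X ^ n) = X ^ n + C a := by
  rw [reflect_add, reflect_one, reflect_C_mul_X_pow, revAt_le le_rfl, Nat.sub_self, pow_zero,
    mul_one]

end CommRing

variable {K : Type*} [Field K] {ι : Type*} [Fintype ι] {z : ι → K} {n : ℕ} {b : K}

theorem pow_eq_of_prod_X_sub_C_dvd (h : (∏ i, (X - C (z i))) ∣ X ^ n - C b) (i : ι) :
    z i ^ n = b := by
  have hdvd : X - C (z i) ∣ X ^ n - C b :=
    (Finset.dvd_prod_of_mem (fun j => X - C (z j)) (Finset.mem_univ i)).trans h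
  simpa [sub_eq_zero] using dvd_iff_isRoot.mp hdvd

theorem injective_of_prod_X_sub_C_dvd (hn : (n : K) ≠ 0) (hb : b ≠ 0)
    (h : (∏ i, (X - C (z i))) ∣ X ^ n - C b) : Function.Injective z :=
  separable_prod_X_sub_C_iff.mp ((separable_X_pow_sub_C b hn hb).of_dvd h)

end Polynomial

theorem exists_prod_X_sub_C_dvd_X_pow_sub_C {R : Type*} [CommRing R] {ι : Type*} [Fintype ι]
    (z : ι → R) {c : ℕ} (hn : c + Fintype.card ι ≠ 0)
    (hvan : ∀ m, c < m → m < c + Fintype.card ι →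
      PowerSeries.coeff m (∏ i, PowerSeries.mk fun k => z i ^ k) = 0) :
    ∃ b, (∏ i, (X - C (z i))) ∣ X ^ (c + Fintype.card ι) - C b := by
  classical
  set G := ∏ i, PowerSeries.mk fun k => z i ^ k
  have hP : (∏ i, (1 - C (z i) * X)).natDegree ≤ Fintype.card ι :=
    natDegree_prod_one_sub_C_mul_X_le Finset.univ z
  have hPG : ((∏ i, (1 - C (z i) * X) : R[X]) : PowerSeries R) * G = 1 := by
    rw [← coeToPowerSeries.ringHom_apply, map_prod, ← Finset.prod_mul_distrib]
    refine Finset.prod_eq_one fun i _ => ?_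
    rw [coeToPowerSeries.ringHom_apply, coe_sub, coe_one, coe_mul, coe_C, coe_X,
      PowerSeries.one_sub_C_mul_X_mul_mk_pow_s4]
  obtain ⟨a, ha⟩ := PowerSeries.exists_mul_trunc_eq_one_add_C_mul_X_pow hP hPG hvan hn
  have hQ : (PowerSeries.trunc (c + 1) G).natDegree ≤ c :=
    Nat.lt_succ_iff.mp (PowerSeries.natDegree_trunc_lt G c)
  have hrefl : reflect (Fintype.card ι) (∏ i, (1 - C (z i) * X)) = ∏ i, (X - C (z i)) :=
    reflect_prod_one_sub_C_mul_X Finset.univ z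
  have hrev := congrArg (reflect (Fintype.card ι + c)) ha
  rw [reflect_mul _ _ hP hQ, hrefl, Nat.add_comm (Fintype.card ι) c,
    reflect_one_add_C_mul_X_pow] at hrev
  refine ⟨-a, reflect c (PowerSeries.trunc (c + 1) G), ?_⟩
  rw [map_neg, sub_neg_eq_add, ← hrev]

open PowerSeries in
theorem coeff_prod_mk_pow_eq_Hpoly (d m : ℕ) (z : Fin d → ℂ) :
    coeff m (∏ i, mk fun k => z i ^ k) = Hpoly d m z := by
  rw [coeff_prod, Hpoly]
  refine Finset.sum_bij' (fun l _ => ⇑l) (fun f _ => Finsupp.equivFunOnFinite.symm f)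
    ?_ ?_ (fun l _ => Finsupp.equivFunOnFinite.symm_apply_apply l) (fun _ _ => rfl) ?_
  · intro l hl
    rw [Finset.mem_finsuppAntidiag] at hl
    simpa [Finset.Nat.mem_antidiagonalTuple, Finset.sum_apply'] using hl.1
  · intro f hf
    rw [Finset.Nat.mem_antidiagonalTuple] at hf
    simpa [Finset.mem_finsuppAntidiag] using hf
  · simp [coeff_mk]

theorem stmt4_general (c d n : ℕ) (hd : 2 ≤ d) (hn : n = c + d)
    (z : Fin d → ℂ) (hvan : ∀ m, c + 1 ≤ m → m ≤ n - 1 → Hpoly d m z = 0) :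
    (∀ i j, z i ^ n = z j ^ n) ∧
      ((∃ i, z i ≠ 0) → (∀ j, z j ≠ 0) ∧ Function.Injective z) := by
  subst hn
  have hn0 : c + d ≠ 0 := by omega
  obtain ⟨b, hdvd⟩ : ∃ b, (∏ i, (X - C (z i))) ∣ X ^ (c + d) - C b := by
    simpa using exists_prod_X_sub_C_dvd_X_pow_sub_C z (c := c) (by simpa using hn0)
      fun m hcm hmn => by
        rw [coeff_prod_mk_pow_eq_Hpoly]
        exact hvan m hcm (by simp only [Fintype.card_fin] at hmn; omega)
  have hpow := pow_eq_of_prod_X_sub_C_dvd hdvd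
  refine ⟨fun i j => by rw [hpow, hpow], fun ⟨i, hi⟩ => ?_⟩
  have hb : b ≠ 0 := hpow i ▸ pow_ne_zero _ hi
  exact ⟨fun j hj => hb (by rw [← hpow j, hj, zero_pow hn0]),
    injective_of_prod_X_sub_C_dvd (by exact_mod_cast hn0) hb hdvd⟩

/-- If `H_{c+1}(z) = ⋯ = H_{n-1}(z) = 0` (with `n = c + d`, `c ≥ 1`, `d ≥ 2`),
then all the `z_i^n` are equal; and if some `z_i ≠ 0` then all `z_j` are nonzero
and pairwise distinct. -/
theorem stmt4 (c d n : ℕ) (hc : 1 ≤ c) (hd : 2 ≤ d) (hn : n = c + d)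
    (z : Fin d → ℂ) (hvan : ∀ m, c + 1 ≤ m → m ≤ n - 1 → Hpoly d m z = 0) :
    (∀ i j, z i ^ n = z j ^ n) ∧
      ((∃ i, z i ≠ 0) → (∀ j, z j ≠ 0) ∧ Function.Injective z) :=
  stmt4_general c d n hd hn z hvan
end
end

section
/- Let ζ = exp(2πi/n) and let I = (i_1,...,i_d) and Î = (î_1,...,î_c) be a partition of the exponents such that {ζ^{i_1},...,ζ^{i_d}, ζ^{î_1},...,ζ^{î_c}} is the full set of n-th roots of (-1)^{d+1} (with n = c+d). Then for every k with 1 ≤ k ≤ d, E_k(ζ^{-i_1},...,ζ^{-i_d}) = H_k(ζ^{n/2 - î_1},...,ζ^{n/2 - î_c}), where E_k is the k-th elementary symmetric polynomial and H_k the k-th complete homogeneous symmetric polynomial. -/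
/-!
The numbers `x` with `x ^ n = a` are the roots of `X ^ n - a`, so the product of `1 + x⁻¹ X` over
all of them is `1 - b X ^ n` for a constant `b`. Splitting the roots into the `z j` and the `w l`,
the generating polynomial `∏ (1 + (z j)⁻¹ X)` of the `E_k` is therefore `(1 - b X ^ n)` times the
inverse of `∏ (1 + (w l)⁻¹ X)`, i.e. times the generating series `∏ 1 / (1 - y l X)` of the
`H_k(y)` with `y l = -(w l)⁻¹`. Since `k ≤ d < n`, the factor `1 - b X ^ n` does not affect the
coefficient of `X ^ k`.
-/

noncomputable section

/-- Elementary symmetric polynomial `E_k` in `d` variables. -/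
def Epoly (d k : ℕ) (z : Fin d → ℂ) : ℂ :=
  ∑ s ∈ (Finset.univ : Finset (Fin d)).powersetCard k, ∏ i ∈ s, z i

open Polynomial

namespace Polynomial

theorem coeff_prod_one_add_C_mul_X {R ι : Type*} [CommSemiring R] (s : Finset ι) (u : ι → R)
    (k : ℕ) :
    (∏ i ∈ s, (1 + C (u i) * X)).coeff k = ∑ t ∈ s.powersetCard k, ∏ i ∈ t, u i := by
  classical
  simp only [Finset.prod_one_add, Finset.prod_mul_distrib, ← map_prod, Finset.prod_const,
    finsetSum_coeff, coeff_C_mul_X_pow, Finset.powersetCard_eq_filter, Finset.sum_filter]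
  exact Finset.sum_congr rfl fun t _ => by simp only [eq_comm]

theorem prod_X_sub_C_eq_X_pow_sub_C {R ι : Type*} [CommRing R] [IsDomain R] [Fintype ι] {n : ℕ}
    (hn : 0 < n) (hcard : Fintype.card ι = n) {a : R} {u : ι → R} (hu : Function.Injective u)
    (h : ∀ i, u i ^ n = a) : ∏ i, (X - C (u i)) = X ^ n - C a := by
  have hmonic : (X ^ n - C a).Monic := monic_X_pow_sub_C a hn.ne'
  set t : Multiset R := Finset.univ.val.map u
  have ht_le : t ≤ (X ^ n - C a).roots := by
    refine (Multiset.le_iff_subset (Finset.univ.nodup.map hu)).2 fun x hx => ?_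
    obtain ⟨i, -, rfl⟩ := Multiset.mem_map.1 hx
    simp [mem_roots hmonic.ne_zero, h i]
  have ht_card : Multiset.card t = n := by simp [t, hcard]
  have ht : t = (X ^ n - C a).roots :=
    Multiset.eq_of_le_of_card_le ht_le <| by
      rw [ht_card]
      exact (card_roots' _).trans natDegree_X_pow_sub_C.le
  rw [← prod_multiset_X_sub_C_of_monic_of_roots_card_eq hmonic
    (by rw [← ht, ht_card, natDegree_X_pow_sub_C]), ← ht, Multiset.map_map]
  rfl

theorem prod_one_add_inv_mul_X {K ι : Type*} [Field K] [Fintype ι] {n : ℕ} (hn : 0 < n)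
    (hcard : Fintype.card ι = n) {a : K} (ha : a ≠ 0) {v : ι → K} (hv : Function.Injective v)
    (h : ∀ i, v i ^ n = a) :
    ∏ i, (1 + C (v i)⁻¹ * X) = 1 - C ((-1) ^ n * a)⁻¹ * X ^ n := by
  have hv0 : ∀ i, v i ≠ 0 := fun i hi => ha (by rw [← h i, hi, zero_pow hn.ne'])
  have hneg : ∏ i, (X - C (-v i)) = X ^ n - C ((-1) ^ n * a) :=
    prod_X_sub_C_eq_X_pow_sub_C hn hcard (neg_injective.comp hv) fun i => by rw [neg_pow, h i]
  have hprod : ∏ i, v i = -((-1) ^ n * a) := by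
    simpa [eval_prod, zero_pow hn.ne'] using congrArg (eval 0) hneg
  have hfactor : ∀ i, 1 + C (v i)⁻¹ * X = C (v i)⁻¹ * (X - C (-v i)) := fun i => by
    rw [map_neg, sub_neg_eq_add, mul_add, ← C_mul, inv_mul_cancel₀ (hv0 i), C_1, add_comm]
  have hne : (-1) ^ n * a ≠ 0 := mul_ne_zero (pow_ne_zero _ (neg_ne_zero.2 one_ne_zero)) ha
  rw [Finset.prod_congr rfl fun i _ => hfactor i, Finset.prod_mul_distrib, ← map_prod,
    Finset.prod_inv_distrib, hprod, hneg, mul_sub, ← C_mul, inv_neg, neg_mul,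
    inv_mul_cancel₀ hne]
  simp only [map_neg, C_1]
  ring

theorem coeff_eq_coeff_of_mul_eq_one_sub_C_mul_X_pow {R : Type*} [CommRing R] {P Q : R[X]}
    {f : PowerSeries R} {b : R} {n k : ℕ} (hPQ : P * Q = 1 - C b * X ^ n)
    (hQf : (Q : PowerSeries R) * f = 1) (hk : k < n) : P.coeff k = PowerSeries.coeff k f := by
  calc P.coeff k = PowerSeries.coeff k (((P * Q : R[X]) : PowerSeries R) * f) := by
        rw [coe_mul, mul_assoc, hQf, mul_one, coeff_coe]
    _ = PowerSeries.coeff k f := by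
        rw [hPQ, coe_sub, coe_one, coe_mul, coe_C, coe_pow, coe_X, sub_mul, one_mul, map_sub,
          mul_comm (PowerSeries.C b), mul_assoc, PowerSeries.coeff_X_pow_mul', if_neg hk.not_ge,
          sub_zero]

end Polynomial

theorem PowerSeries.mk_pow_mul_one_sub_C_mul_X {R : Type*} [CommRing R] (y : R) :
    PowerSeries.mk (fun m => y ^ m) * (1 - PowerSeries.C y * PowerSeries.X) = 1 := by
  simpa [PowerSeries.rescale_mk, PowerSeries.rescale_X] using
    congrArg (PowerSeries.rescale y) (PowerSeries.mk_one_mul_one_sub_eq_one R)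

theorem mk_Hpoly_eq_prod (c : ℕ) (y : Fin c → ℂ) :
    PowerSeries.mk (fun m => Hpoly c m y) = ∏ l, PowerSeries.mk (fun m => y l ^ m) := by
  ext k
  rw [PowerSeries.coeff_mk, PowerSeries.coeff_prod, Hpoly]
  refine Finset.sum_nbij' (fun α => Finsupp.equivFunOnFinite.symm α) (fun l => ⇑l) ?_ ?_
    (fun α _ => Finsupp.equivFunOnFinite.apply_symm_apply α) (fun l _ => by simp) ?_
  · intro α hα
    refine Finset.mem_finsuppAntidiag.2 ⟨?_, Finset.subset_univ _⟩
    rw [← Finset.Nat.mem_antidiagonalTuple.1 hα]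
    simp only [Finsupp.coe_equivFunOnFinite_symm]
  · exact fun l hl => Finset.Nat.mem_antidiagonalTuple.2 (Finset.mem_finsuppAntidiag.1 hl).1
  · intro α _
    simp [PowerSeries.coeff_mk]

theorem coe_prod_one_sub_C_mul_X_mul_mk_Hpoly (c : ℕ) (y : Fin c → ℂ) :
    ((∏ l, (1 - C (y l) * X) : ℂ[X]) : PowerSeries ℂ) * PowerSeries.mk (fun m => Hpoly c m y)
      = 1 := by
  rw [mk_Hpoly_eq_prod, ← coeToPowerSeries.ringHom_apply, map_prod, ← Finset.prod_mul_distrib]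
  refine Finset.prod_eq_one fun l _ => ?_
  rw [mul_comm, ← PowerSeries.mk_pow_mul_one_sub_C_mul_X (y l)]
  simp [coeToPowerSeries.ringHom_apply]

theorem stmt6_general (c d n : ℕ) (hn : n = c + d) (hc : 1 ≤ c)
    (z : Fin d → ℂ) (w : Fin c → ℂ)
    (hroots : ∀ x ∈ Set.range z ∪ Set.range w, x ^ n = (-1 : ℂ) ^ (d + 1))
    (hinj : Function.Injective (Sum.elim z w : Fin d ⊕ Fin c → ℂ)) :
    ∀ k, 1 ≤ k → k ≤ d →
      Epoly d k (fun j => (z j)⁻¹) = Hpoly c k (fun l => -(w l)⁻¹) := by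
  intro k _ hkd
  have hall_roots : ∀ i, Sum.elim z w i ^ n = (-1 : ℂ) ^ (d + 1) := fun i =>
    hroots _ (by rcases i with j | l <;> simp)
  have hsplit := prod_one_add_inv_mul_X (by omega) (by simp [hn, add_comm])
    (pow_ne_zero _ (neg_ne_zero.2 one_ne_zero)) hinj hall_roots
  simp only [Fintype.prod_sum_type, Sum.elim_inl, Sum.elim_inr] at hsplit
  have hinv := coe_prod_one_sub_C_mul_X_mul_mk_Hpoly c fun l => -(w l)⁻¹
  simp only [map_neg, neg_mul, sub_neg_eq_add] at hinv
  calc Epoly d k (fun j => (z j)⁻¹)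
      = (∏ j, (1 + C (z j)⁻¹ * X)).coeff k := by
        rw [Epoly, coeff_prod_one_add_C_mul_X]
    _ = Hpoly c k (fun l => -(w l)⁻¹) := by
      rw [coeff_eq_coeff_of_mul_eq_one_sub_C_mul_X_pow hsplit hinv (by omega),
        PowerSeries.coeff_mk]

/-- If `ζ^{i_1},…,ζ^{i_d},ζ^{î_1},…,ζ^{î_c}` enumerates all `n`-th roots of
`(-1)^{d+1}` (here `z j = ζ^{i_j}` and `w l = ζ^{î_l}`, `n = c + d`), then
`E_k(ζ^{-i_1},…,ζ^{-i_d}) = H_k(ζ^{n/2-î_1},…,ζ^{n/2-î_c})` for `1 ≤ k ≤ d`.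
Note `ζ^{n/2 - î_l} = -ζ^{-î_l} = -(w l)⁻¹`. -/
theorem stmt6 (c d n : ℕ) (hn : n = c + d) (hd : 1 ≤ d) (hc : 1 ≤ c)
    (z : Fin d → ℂ) (w : Fin c → ℂ)
    (hroots : ∀ x ∈ Set.range z ∪ Set.range w, x ^ n = (-1 : ℂ) ^ (d + 1))
    (hinj : Function.Injective (Sum.elim z w : Fin d ⊕ Fin c → ℂ))
    (hall : ∀ x : ℂ, x ^ n = (-1 : ℂ) ^ (d + 1) → x ∈ Set.range z ∪ Set.range w) :
    ∀ k, 1 ≤ k → k ≤ d →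
      Epoly d k (fun j => (z j)⁻¹) = Hpoly c k (fun l => -(w l)⁻¹) :=
  stmt6_general c d n hn hc z w hroots hinj
end
end

section
/- Unitary-type orthogonality: with ζ^I and ζ^J two d-tuples of distinct n-th roots of (-1)^{d+1}, Σ_{λ ∈ Sh(d,c)} S_λ(ζ^I)·conj(S_λ(ζ^J)) = δ_{I,J} · n^d / |Vand(ζ^I)|^2. -/
/-!
Multiplying by the two Vandermonde determinants, the bialternant formula
`s_λ · a_δ = a_{λ+δ}` turns the sum into `∑_μ a_μ(z) a_μ(w̄)` over the strictly increasing
`μ : Fin d → Fin n`, which by Cauchy–Binet is the Gram determinant `det (∑_{m<n} (zᵢ w̄ⱼ)^m)`.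
For unimodular `zᵢ, wⱼ` with `zᵢ^n = wⱼ^n` these geometric sums are `n·[zᵢ = wⱼ]`, so the Gram
matrix is `n` times a partial permutation matrix: its determinant is `n^d · sign σ` if `w = z ∘ σ`
and `0` if the ranges differ.

The bialternant formula comes from the Jacobi–Trudi determinant: with `H(t) = ∏ᵢ 1/(1 - zᵢ t)`
and `Eⱼ(t) = ∏_{i ≠ j} (1 - zᵢ t)`, the product `H Eⱼ = 1/(1 - zⱼ t)` gives
`(H_{μ_a - b})_{a,b} · (coeff_b Eⱼ)_{b,j} = (zⱼ^{μ_a})_{a,j}`; for `μ = δ` the first factor is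
unitriangular, so the second one has determinant `a_δ`.
-/

noncomputable section
open scoped Classical

/-- `H_k` for integer index `k` (zero for negative `k`). -/
def HZ (d : ℕ) (z : Fin d → ℂ) (k : ℤ) : ℂ :=
  if 0 ≤ k then Hpoly d k.toNat z else 0

/-- Schur polynomial via the Jacobi–Trudi determinant `det(H_{λ_i - i + j})`. -/
def schur (d : ℕ) (lam : Fin d → ℕ) (z : Fin d → ℂ) : ℂ :=
  Matrix.det (Matrix.of fun i j : Fin d => HZ d z ((lam i : ℤ) + j - i))

/-- The partitions fitting in a `d × c` box, as weakly decreasing functions. -/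
def box (d c : ℕ) : Finset (Fin d → Fin (c + 1)) :=
  Finset.univ.filter fun lam => ∀ i j : Fin d, i ≤ j → lam j ≤ lam i

/-- Poincaré dual partition `PD(λ) = (c - λ_d, …, c - λ_1)`. -/
def PD (d c : ℕ) (lam : Fin d → ℕ) : Fin d → ℕ := fun i => c - lam i.rev

/-- Squared modulus of the Vandermonde determinant of a `d`-tuple. -/
def vandSq (d : ℕ) (z : Fin d → ℂ) : ℝ :=
  ‖∏ k : Fin d, ∏ j ∈ Finset.univ.filter (fun j : Fin d => k < j), (z k - z j)‖ ^ 2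


open Finset Matrix PowerSeries ComplexConjugate

theorem PowerSeries.mk_pow_mul_one_sub_C_mul_X_s10 {R : Type*} [CommRing R] (a : R) :
    (mk fun k => a ^ k) * (1 - C a * X) = 1 := by
  simpa [rescale_X, rescale_mk] using congrArg (rescale a) (mk_one_mul_one_sub_eq_one R)

section Bialternant

variable {d : ℕ}

def completeSeries (z : Fin d → ℂ) : PowerSeries ℂ :=
  ∏ i, mk fun k => z i ^ k

theorem coeff_completeSeries (z : Fin d → ℂ) (m : ℕ) :
    coeff m (completeSeries z) = Hpoly d m z := by
  rw [completeSeries, coeff_prod, Hpoly, ← piAntidiag_univ_fin_eq_antidiagonalTuple,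
    finsuppAntidiag, sum_map]
  simp only [coeff_mk]
  exact sum_attach _ fun α : Fin d → ℕ => ∏ i, z i ^ α i

theorem sum_HZ_mul_coeff (z : Fin d → ℂ) {p : Polynomial ℂ} (hp : p.natDegree < d) (m : ℕ) :
    ∑ b : Fin d, HZ d z (m - b) * p.coeff b = coeff m (completeSeries z * (p : PowerSeries ℂ)) := by
  set f : ℕ → ℂ := fun b => HZ d z (m - b) * p.coeff b
  have hlow : ∑ b ∈ range (m + 1 + d), f b = ∑ b ∈ range d, f b := by
    refine (sum_subset (range_subset_range.2 (by omega)) fun b _ hb => ?_).symm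
    simp only [f, Polynomial.coeff_eq_zero_of_natDegree_lt (hp.trans_le (by simpa using hb)),
      mul_zero]
  have hhigh : ∑ b ∈ range (m + 1 + d), f b = ∑ b ∈ range (m + 1), f b := by
    refine (sum_subset (range_subset_range.2 (by omega)) fun b _ hb => ?_).symm
    simp only [mem_range, not_lt] at hb
    simp only [f, HZ, if_neg (show ¬ (0 : ℤ) ≤ m - b by omega), zero_mul]
  rw [Fin.sum_univ_eq_sum_range f, ← hlow, hhigh, mul_comm, coeff_mul,
    Nat.sum_antidiagonal_eq_sum_range_succ fun i j => coeff i (p : PowerSeries ℂ) * coeff j _]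
  refine sum_congr rfl fun b hb => ?_
  have hb : b ≤ m := Nat.lt_succ_iff.1 (mem_range.1 hb)
  rw [Polynomial.coeff_coe, coeff_completeSeries, mul_comm]
  simp only [f, HZ, if_pos (show (0 : ℤ) ≤ m - b by omega)]
  congr 3
  omega

def omitPoly (z : Fin d → ℂ) (j : Fin d) : Polynomial ℂ :=
  ∏ i ∈ univ.erase j, (1 - Polynomial.C (z i) * Polynomial.X)

theorem natDegree_omitPoly_lt (z : Fin d → ℂ) (j : Fin d) : (omitPoly z j).natDegree < d :=
  calc (omitPoly z j).natDegree
      ≤ ∑ i ∈ univ.erase j, (1 - Polynomial.C (z i) * Polynomial.X : Polynomial ℂ).natDegree :=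
        Polynomial.natDegree_prod_le _ _
    _ ≤ ∑ _i ∈ univ.erase j, 1 := sum_le_sum fun i _ => by compute_degree
    _ < d := by simp [card_erase_of_mem (mem_univ j), j.pos]

theorem completeSeries_mul_omitPoly (z : Fin d → ℂ) (j : Fin d) :
    completeSeries z * (omitPoly z j : PowerSeries ℂ) = mk fun k => z j ^ k := by
  have hcoe : (omitPoly z j : PowerSeries ℂ) = ∏ i ∈ univ.erase j, (1 - C (z i) * X) := by
    rw [omitPoly, ← Polynomial.coeToPowerSeries.ringHom_apply, map_prod]
    simp [Polynomial.coeToPowerSeries.ringHom_apply]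
  rw [hcoe, completeSeries, ← mul_prod_erase univ _ (mem_univ j), mul_assoc, ← prod_mul_distrib]
  simp [mk_pow_mul_one_sub_C_mul_X_s10]

def alternant {R : Type*} [CommRing R] (μ : Fin d → ℕ) (z : Fin d → R) :
    Matrix (Fin d) (Fin d) R :=
  of fun a j => z j ^ μ a

theorem alternant_val_eq_vandermonde_transpose {R : Type*} [CommRing R] (z : Fin d → R) :
    alternant (fun a => a) z = (vandermonde z)ᵀ := rfl

def hMatrix (z : Fin d → ℂ) (μ : Fin d → ℕ) : Matrix (Fin d) (Fin d) ℂ :=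
  of fun a b => HZ d z (μ a - b)

def omitMatrix (z : Fin d → ℂ) : Matrix (Fin d) (Fin d) ℂ :=
  of fun b j => (omitPoly z j).coeff b

theorem hMatrix_mul_omitMatrix (z : Fin d → ℂ) (μ : Fin d → ℕ) :
    hMatrix z μ * omitMatrix z = alternant μ z := by
  ext a j
  rw [mul_apply]
  simp only [hMatrix, omitMatrix, alternant, of_apply]
  rw [sum_HZ_mul_coeff z (natDegree_omitPoly_lt z j), completeSeries_mul_omitPoly, coeff_mk]

theorem det_hMatrix_val (z : Fin d → ℂ) : (hMatrix z fun a => a).det = 1 := by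
  rw [det_of_isLowerTriangular]
  · refine prod_eq_one fun a _ => ?_
    simp [hMatrix, HZ, Hpoly, Finset.Nat.antidiagonalTuple_zero_right]
  · intro a b hab
    have hab : (a : ℕ) < b := hab
    simp only [hMatrix, HZ, of_apply]
    rw [if_neg (by omega)]

theorem det_omitMatrix (z : Fin d → ℂ) : (omitMatrix z).det = (vandermonde z).det := by
  simpa [det_hMatrix_val, alternant_val_eq_vandermonde_transpose] using
    congrArg det (hMatrix_mul_omitMatrix z fun a => a)

theorem schur_eq_det_hMatrix (z : Fin d → ℂ) (lam : Fin d → ℕ) :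
    schur d lam z = (hMatrix z fun a => lam a.rev + a).det := by
  rw [schur, ← det_submatrix_equiv_self Fin.revPerm]
  congr 1
  ext a b
  simp only [hMatrix, submatrix_apply, of_apply, Fin.revPerm_apply, Fin.val_rev]
  congr 1
  omega

theorem schur_mul_det_vandermonde (z : Fin d → ℂ) (lam : Fin d → ℕ) :
    schur d lam z * (vandermonde z).det = (alternant (fun a => lam a.rev + a) z).det := by
  rw [schur_eq_det_hMatrix, ← det_omitMatrix, ← det_mul, hMatrix_mul_omitMatrix]

theorem schur_conj (z : Fin d → ℂ) (lam : Fin d → ℕ) :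
    conj (schur d lam z) = schur d lam (conj ∘ z) := by
  rw [schur, schur, RingHom.map_det]
  congr 1
  ext i j
  simp only [RingHom.mapMatrix_apply, map_apply, of_apply, HZ, Hpoly]
  split_ifs <;> simp [map_sum, map_prod]

end Bialternant

section CauchyBinet

theorem Matrix.det_mul_eq_sum_prod_mul_det_submatrix {R m ι : Type*} [CommRing R] [Fintype m]
    [DecidableEq m] [Fintype ι] (A : Matrix m ι R) (B : Matrix ι m R) :
    (A * B).det = ∑ g : m → ι, (∏ i, A i (g i)) * (B.submatrix g id).det := by
  have hrows : A * B = fun i => ∑ k, A i k • B k := by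
    ext i j
    simp [mul_apply, Finset.sum_apply]
  rw [det, hrows, ← AlternatingMap.coe_multilinearMap, MultilinearMap.map_sum]
  simp only [MultilinearMap.map_smul_univ, smul_eq_mul]
  rfl

variable {ι : Type*} [LinearOrder ι] {d : ℕ}

theorem Tuple.sort_strictMono_comp {μ : Fin d → ι} (hμ : StrictMono μ) (σ : Equiv.Perm (Fin d)) :
    Tuple.sort (μ ∘ σ) = σ⁻¹ := by
  refine (Tuple.eq_sort_iff.2 ⟨?_, fun i j hij heq => ?_⟩).symm
  · simpa [Function.comp_def] using hμ.monotone
  · exact absurd ((hμ.injective.comp σ.injective).comp σ⁻¹.injective heq) hij.ne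

variable [Fintype ι]

theorem sum_injective_eq_sum_strictMono_sum_perm {M : Type*} [AddCommMonoid M]
    (F : (Fin d → ι) → M) :
    ∑ g : Fin d → ι with Function.Injective g, F g =
      ∑ μ : Fin d → ι with StrictMono μ, ∑ σ : Equiv.Perm (Fin d), F (μ ∘ σ) := by
  rw [← sum_product' (f := fun (μ : Fin d → ι) (σ : Equiv.Perm (Fin d)) => F (μ ∘ σ))]
  refine sum_nbij' (fun g => (g ∘ Tuple.sort g, (Tuple.sort g)⁻¹)) (fun p => p.1 ∘ p.2)
    (fun g hg => ?_) (fun p hp => ?_) (fun g _ => ?_) (fun p hp => ?_) (fun g _ => ?_)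
  · simp only [mem_filter_univ] at hg
    simpa using (Tuple.monotone_sort g).strictMono_of_injective (hg.comp (Tuple.sort g).injective)
  · simp only [mem_product, mem_filter_univ] at hp
    simpa using hp.1.injective.comp p.2.injective
  · ext i; simp
  · simp only [mem_product, mem_filter_univ] at hp
    rw [Tuple.sort_strictMono_comp hp.1]
    ext i <;> simp
  · simp [Function.comp_def]

theorem Matrix.det_mul_eq_sum_strictMono {R : Type*} [CommRing R] (A : Matrix (Fin d) ι R)
    (B : Matrix ι (Fin d) R) :
    (A * B).det =
      ∑ μ : Fin d → ι with StrictMono μ, (A.submatrix id μ).det * (B.submatrix μ id).det := by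
  have hinj : ∀ g ∈ (univ : Finset (Fin d → ι)), (∏ i, A i (g i)) * (B.submatrix g id).det ≠ 0 →
      Function.Injective g := fun g _ hne => by
    by_contra hg
    obtain ⟨i, j, hgij, hij⟩ := Function.not_injective_iff.1 hg
    exact hne (by rw [det_zero_of_row_eq hij (by ext; simp [hgij]), mul_zero])
  rw [det_mul_eq_sum_prod_mul_det_submatrix, ← sum_filter_of_ne hinj,
    sum_injective_eq_sum_strictMono_sum_perm]
  refine sum_congr rfl fun μ _ => ?_
  calc ∑ σ : Equiv.Perm (Fin d), (∏ i, A i ((μ ∘ σ) i)) * (B.submatrix (μ ∘ σ) id).det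
      = ∑ σ : Equiv.Perm (Fin d), (Equiv.Perm.sign σ * ∏ i, (A.submatrix id μ)ᵀ (σ i) i) *
          (B.submatrix μ id).det := by
        refine sum_congr rfl fun σ _ => ?_
        rw [show B.submatrix (μ ∘ σ) id = (B.submatrix μ id).submatrix σ id from rfl, det_permute]
        simp only [transpose_apply, submatrix_apply, id, Function.comp_apply]
        ring
    _ = (A.submatrix id μ).det * (B.submatrix μ id).det := by
        rw [← sum_mul, ← det_apply', det_transpose]

end CauchyBinet

theorem det_sum_pow_eq_sum_strictMono {R : Type*} [CommRing R] {d n : ℕ} (z w : Fin d → R) :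
    (of fun i j => ∑ m : Fin n, (z i * w j) ^ (m : ℕ)).det =
      ∑ μ : Fin d → Fin n with StrictMono μ,
        (alternant (fun a => μ a) z).det * (alternant (fun a => μ a) w).det := by
  have hmul : (of fun i j => ∑ m : Fin n, (z i * w j) ^ (m : ℕ)) =
      (of fun i (m : Fin n) => z i ^ (m : ℕ)) * of fun (m : Fin n) j => w j ^ (m : ℕ) := by
    ext i j
    simp [mul_apply, mul_pow]
  rw [hmul, det_mul_eq_sum_strictMono]
  refine sum_congr rfl fun μ _ => ?_
  rw [← det_transpose]
  rfl

theorem Fin.val_add_sub_le_of_strictMono {d n : ℕ} {f : Fin d → Fin n} (hf : StrictMono f)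
    {i j : Fin d} (hij : i ≤ j) : (f i : ℕ) + (j - i) ≤ f j := by
  have hsub : (Ico i j).image f ⊆ Ico (f i) (f j) := image_subset_iff.2 fun k hk =>
    mem_Ico.2 ⟨hf.monotone (mem_Ico.1 hk).1, hf (mem_Ico.1 hk).2⟩
  have h := card_le_card hsub
  rw [card_image_of_injective _ hf.injective, Fin.card_Ico, Fin.card_Ico] at h
  have := hf.monotone hij
  omega

theorem Fin.val_apply_mem_Icc_of_strictMono {c d : ℕ} {f : Fin d → Fin (c + d)}
    (hf : StrictMono f) (a : Fin d) : (f a : ℕ) ∈ Set.Icc (a : ℕ) (c + a) := by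
  have hlow := Fin.val_add_sub_le_of_strictMono hf (show ⟨0, a.pos⟩ ≤ a from Nat.zero_le _)
  have hhigh := Fin.val_add_sub_le_of_strictMono hf
    (show a ≤ ⟨d - 1, by omega⟩ from Nat.le_sub_one_of_lt a.isLt)
  have := (f ⟨d - 1, by omega⟩).isLt
  simp only at hlow hhigh
  exact ⟨by omega, by omega⟩

/-- `a ↦ λ (rev a) + a` is `λ + δ` listed in increasing order. -/
theorem sum_box_eq_sum_strictMono {M : Type*} [AddCommMonoid M] (c d : ℕ)
    (G : (Fin d → ℕ) → M) :
    ∑ lam ∈ box d c, G (fun a => (lam a.rev : ℕ) + a) =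
      ∑ μ : Fin d → Fin (c + d) with StrictMono μ, G (fun a => μ a) := by
  refine sum_bij' (fun lam _ a => ⟨lam a.rev + a, by omega⟩)
    (fun μ hμ i => ⟨μ i.rev - i.rev, by
      obtain ⟨-, hle⟩ := Fin.val_apply_mem_Icc_of_strictMono ((mem_filter_univ _).1 hμ) i.rev
      omega⟩)
    (fun lam hlam => ?_) (fun μ hμ => ?_) (fun lam _ => ?_) (fun μ hμ => ?_) (fun lam _ => rfl)
  · rw [_root_.box, mem_filter_univ] at hlam
    refine (mem_filter_univ _).2 fun a b hab => ?_
    have := hlam _ _ (Fin.rev_le_rev.2 hab.le)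
    rw [Fin.lt_def] at hab ⊢
    rw [Fin.le_def] at this
    simp only
    omega
  · rw [mem_filter_univ] at hμ
    refine (mem_filter_univ _).2 fun i j hij => ?_
    have := Fin.val_add_sub_le_of_strictMono hμ (Fin.rev_le_rev.2 hij)
    rw [Fin.le_def] at hij ⊢
    simp only [Fin.val_rev] at this ⊢
    omega
  · ext i
    simp
  · ext a
    obtain ⟨hge, -⟩ := Fin.val_apply_mem_Icc_of_strictMono ((mem_filter_univ _).1 hμ) a
    simp only [Fin.rev_rev]
    omega

theorem sum_box_schur_mul_schur_mul_det_vandermonde (c d : ℕ) (z w : Fin d → ℂ) :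
    (∑ lam ∈ box d c, schur d (fun i => (lam i : ℕ)) z * schur d (fun i => (lam i : ℕ)) w) *
        ((vandermonde z).det * (vandermonde w).det) =
      (of fun i j => ∑ m : Fin (c + d), (z i * w j) ^ (m : ℕ)).det := by
  rw [det_sum_pow_eq_sum_strictMono, ← sum_box_eq_sum_strictMono c d fun ν =>
    (alternant ν z).det * (alternant ν w).det, sum_mul]
  refine sum_congr rfl fun lam _ => ?_
  rw [mul_mul_mul_comm, schur_mul_det_vandermonde, schur_mul_det_vandermonde]

theorem norm_eq_one_of_pow_eq_neg_one_pow {z : ℂ} {n k : ℕ} (hn : n ≠ 0)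
    (hz : z ^ n = (-1) ^ k) : ‖z‖ = 1 :=
  (pow_eq_one_iff_of_nonneg (norm_nonneg z) hn).1 (by rw [← norm_pow, hz]; simp)

theorem sum_range_mul_conj_pow {z w : ℂ} (hw : ‖w‖ = 1) {n : ℕ} (h : z ^ n = w ^ n) :
    ∑ m ∈ range n, (z * conj w) ^ m = if z = w then (n : ℂ) else 0 := by
  have hww : w * conj w = 1 := by rw [Complex.mul_conj', hw]; simp
  split_ifs with hzw
  · simp [hzw, hww]
  · have hq : z * conj w ≠ 1 := fun hq => hzw <| by
      rw [← mul_one z, ← hww, mul_comm w, ← mul_assoc, hq, one_mul]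
    rw [geom_sum_eq hq, mul_pow, h, ← mul_pow, hww, one_pow, sub_self, zero_div]

theorem of_sum_mul_conj_pow_eq_smul {d n : ℕ} {z w : Fin d → ℂ} (hw : ∀ k, ‖w k‖ = 1)
    (h : ∀ i j, z i ^ n = w j ^ n) :
    (of fun i j => ∑ m : Fin n, (z i * conj (w j)) ^ (m : ℕ)) =
      (n : ℂ) • of fun i j => if z i = w j then 1 else 0 := by
  ext i j
  simp only [of_apply, Matrix.smul_apply]
  rw [Fin.sum_univ_eq_sum_range (fun m => (z i * conj (w j)) ^ m),
    sum_range_mul_conj_pow (hw j) (h i j)]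
  simp

section IndicatorDet

variable {R α : Type*} [CommRing R] {d : ℕ}

theorem det_ite_eq_eq_zero_of_range_ne {z w : Fin d → α} (h : Set.range z ≠ Set.range w) :
    (of fun i j => if z i = w j then (1 : R) else 0).det = 0 := by
  by_cases hrow : ∃ i, ∀ j, z i ≠ w j
  · obtain ⟨i, hi⟩ := hrow
    exact det_eq_zero_of_row_eq_zero i fun j => by simp [hi j]
  · obtain ⟨j, hj⟩ : ∃ j, ∀ i, z i ≠ w j := by
      by_contra hcol
      push Not at hrow hcol
      refine h (Set.Subset.antisymm ?_ ?_)
      · rintro _ ⟨i, rfl⟩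
        obtain ⟨j, hj⟩ := hrow i
        exact ⟨j, hj.symm⟩
      · rintro _ ⟨j, rfl⟩
        exact hcol j
    exact det_eq_zero_of_column_eq_zero j fun i => by simp [hj i]

theorem det_ite_eq_comp_perm {z : Fin d → α} (hz : Function.Injective z) (σ : Equiv.Perm (Fin d)) :
    (of fun i j => if z i = z (σ j) then (1 : R) else 0).det = Equiv.Perm.sign σ := by
  have hperm : (of fun i j => if z i = z (σ j) then (1 : R) else 0) =
      (1 : Matrix (Fin d) (Fin d) R).submatrix id σ := by
    ext i j
    simp [one_apply, hz.eq_iff]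
  rw [hperm, det_permute', det_one, mul_one]

end IndicatorDet

theorem exists_perm_eq_comp_of_range_eq {α : Type*} {d : ℕ} {z w : Fin d → α}
    (hz : Function.Injective z) (hw : Function.Injective w) (h : Set.range z = Set.range w) :
    ∃ σ : Equiv.Perm (Fin d), w = z ∘ σ :=
  ⟨(Equiv.ofInjective w hw).trans ((Equiv.setCongr h).symm.trans (Equiv.ofInjective z hz).symm),
    funext fun j => by simp [Equiv.apply_ofInjective_symm]⟩

theorem det_vandermonde_comp_perm {R : Type*} [CommRing R] {d : ℕ} (z : Fin d → R)
    (σ : Equiv.Perm (Fin d)) :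
    (vandermonde (z ∘ σ)).det = Equiv.Perm.sign σ * (vandermonde z).det :=
  det_permute σ (vandermonde z)

section VandSq

variable {d : ℕ}

theorem det_vandermonde_conj (z : Fin d → ℂ) :
    conj (vandermonde z).det = (vandermonde (conj ∘ z)).det := by
  rw [RingHom.map_det]
  congr 1
  ext i j
  simp [vandermonde_apply]

theorem vandSq_eq_norm_det_vandermonde_sq (z : Fin d → ℂ) :
    vandSq d z = ‖(vandermonde z).det‖ ^ 2 := by
  rw [vandSq, det_vandermonde]
  simp only [norm_prod]
  congr 2
  ext k
  refine prod_congr (by ext j; simp) fun j _ => norm_sub_rev _ _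

theorem vandSq_ne_zero {z : Fin d → ℂ} (hz : Function.Injective z) : vandSq d z ≠ 0 := by
  rw [vandSq_eq_norm_det_vandermonde_sq]
  exact pow_ne_zero 2 (norm_ne_zero_iff.2 (det_vandermonde_ne_zero_iff.2 hz))

theorem ofReal_vandSq (z : Fin d → ℂ) :
    (vandSq d z : ℂ) = (vandermonde z).det * (vandermonde (conj ∘ z)).det := by
  rw [vandSq_eq_norm_det_vandermonde_sq, ← det_vandermonde_conj, Complex.mul_conj']
  push_cast
  rfl

end VandSq

/-- Unitary-type orthogonality: for `d`-tuples `z = ζ^I`, `w = ζ^J` of distinct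
`n`-th roots of `(-1)^{d+1}`,
`∑_{λ ∈ Sh(d,c)} S_λ(ζ^I)·conj(S_λ(ζ^J)) = δ_{I,J}·n^d/|Vand(ζ^I)|²`. -/
theorem stmt10 (c d n : ℕ) (hn : n = c + d) (z w : Fin d → ℂ)
    (hz : ∀ k, z k ^ n = (-1 : ℂ) ^ (d + 1)) (hzinj : Function.Injective z)
    (hw : ∀ k, w k ^ n = (-1 : ℂ) ^ (d + 1)) (hwinj : Function.Injective w) :
    ∑ lam ∈ box d c,
        schur d (fun i => (lam i : ℕ)) z *
          (starRingEnd ℂ) (schur d (fun i => (lam i : ℕ)) w) =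
      if Set.range z = Set.range w then (n : ℂ) ^ d / (vandSq d z : ℂ) else 0 := by
  have hnorm : ∀ k, ‖w k‖ = 1 := fun k =>
    norm_eq_one_of_pow_eq_neg_one_pow (by have := k.pos; omega) (hw k)
  have key := sum_box_schur_mul_schur_mul_det_vandermonde c d z (conj ∘ w)
  simp only [Function.comp_apply] at key
  rw [← hn, of_sum_mul_conj_pow_eq_smul hnorm fun i j => (hz i).trans (hw j).symm, det_smul,
    Fintype.card_fin] at key
  simp_rw [schur_conj]
  have hVz : (vandermonde z).det ≠ 0 := det_vandermonde_ne_zero_iff.2 hzinj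
  split_ifs with hr
  · obtain ⟨σ, rfl⟩ := exists_perm_eq_comp_of_range_eq hzinj hwinj hr
    simp only [Function.comp_apply] at key
    rw [det_ite_eq_comp_perm hzinj, show vandermonde (conj ∘ z ∘ σ) =
      vandermonde ((conj ∘ z) ∘ σ) from rfl, det_vandermonde_comp_perm] at key
    rw [eq_div_iff (by exact_mod_cast vandSq_ne_zero hzinj), ofReal_vandSq]
    refine mul_left_cancel₀ (by simp : ((Equiv.Perm.sign σ : ℤ) : ℂ) ≠ 0) ?_
    linear_combination key
  · have hVw : (vandermonde (conj ∘ w)).det ≠ 0 :=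
      det_vandermonde_ne_zero_iff.2 ((RingHom.injective _).comp hwinj)
    rw [det_ite_eq_eq_zero_of_range_ne hr, mul_zero] at key
    exact (mul_eq_zero.1 key).resolve_right (mul_ne_zero hVz hVw)
end
end

section
/- Let m be a homogeneous symmetric polynomial in d variables. Then Σ_I m(ζ^I) = 0 unless n divides deg(m), where the sum runs over all d-element subsets I of the n-th roots of (-1)^{d+1} and ζ^I denotes the corresponding d-tuple of roots. -/
noncomputable section
open scoped Classical

/-- The `d`-tuple of `n`-th roots of `(-1)^{d+1}` selected by a strictly
monotone `K : Fin d → Fin n`: the `k`-th entry is `ε·ζ^{K k}` where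
`ζ = exp(2πi/n)` and `ε = exp(πi(d+1)/n)` is a fixed `n`-th root of `(-1)^{d+1}`. -/
def rootTup (d n : ℕ) (K : Fin d → Fin n) : Fin d → ℂ := fun k =>
  Complex.exp (Real.pi * Complex.I * (d + 1) / n) *
    Complex.exp (2 * Real.pi * Complex.I / n) ^ (K k : ℕ)

lemma eval_smul_homog {d k : ℕ} {m : MvPolynomial (Fin d) ℂ} (h : m.IsHomogeneous k)
    (c : ℂ) (x : Fin d → ℂ) :
    MvPolynomial.eval (c • x) m = c ^ k * MvPolynomial.eval x m := by
  rw [MvPolynomial.eval_eq, MvPolynomial.eval_eq, Finset.mul_sum]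
  refine Finset.sum_congr rfl fun e he => ?_
  have hd : ∑ i ∈ e.support, e i = k := by
    have := h (MvPolynomial.mem_support_iff.mp he)
    simpa [Finsupp.weight_apply, Finsupp.sum] using this
  rw [← hd]
  simp only [Pi.smul_apply, smul_eq_mul, mul_pow]
  rw [Finset.prod_mul_distrib, Finset.prod_pow_eq_pow_sum]
  ring

lemma eval_range_eq {d n : ℕ} {m : MvPolynomial (Fin d) ℂ} (hsym : m.IsSymmetric)
    {K K' : Fin d → Fin n} (hK : Function.Injective K) (hK' : Function.Injective K')
    (hr : Finset.image K Finset.univ = Finset.image K' Finset.univ) :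
    MvPolynomial.eval (rootTup d n K') m = MvPolynomial.eval (rootTup d n K) m := by
  have hex : ∀ i, ∃ j, K j = K' i := by
    intro i
    have : K' i ∈ Finset.image K Finset.univ := by
      rw [hr]; exact Finset.mem_image_of_mem _ (Finset.mem_univ i)
    simpa using this
  set τ : Fin d → Fin d := fun i => (hex i).choose with hτ
  have hτs : ∀ i, K (τ i) = K' i := fun i => (hex i).choose_spec
  have hτinj : Function.Injective τ := by
    intro a b hab
    apply hK'
    rw [← hτs a, ← hτs b, hab]
  have hτbij : Function.Bijective τ := Finite.injective_iff_bijective.mp hτinj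
  set σ : Equiv.Perm (Fin d) := Equiv.ofBijective τ hτbij with hσ
  have h1 : rootTup d n K' = rootTup d n K ∘ σ := by
    funext i
    simp only [rootTup, Function.comp_apply, hσ, Equiv.ofBijective_apply, hτs]
  rw [h1, ← MvPolynomial.eval_rename, hsym σ]

/-- Sort an injective tuple into a strictly monotone one (junk value otherwise). -/
def sortIm {d n : ℕ} (K : Fin d → Fin n) : Fin d → Fin n :=
  if h : (Finset.image K Finset.univ).card = d
    then (Finset.image K Finset.univ).orderEmbOfFin h else K

lemma card_im {d n : ℕ} {K : Fin d → Fin n} (hK : Function.Injective K) :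
    (Finset.image K Finset.univ).card = d := by
  rw [Finset.card_image_of_injective _ hK]; simp

lemma sortIm_image {d n : ℕ} {K : Fin d → Fin n} (hK : Function.Injective K) :
    Finset.image (sortIm K) Finset.univ = Finset.image K Finset.univ := by
  rw [sortIm, dif_pos (card_im hK)]
  have := Finset.range_orderEmbOfFin (Finset.image K Finset.univ) (card_im hK)
  rw [← Finset.coe_inj]
  rw [Finset.coe_image, Finset.coe_univ, Set.image_univ, this]

lemma sortIm_strictMono {d n : ℕ} {K : Fin d → Fin n} (hK : Function.Injective K) :
    StrictMono (sortIm K) := by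
  rw [sortIm, dif_pos (card_im hK)]
  exact (Finset.orderEmbOfFin _ _).strictMono

lemma sortIm_eq {d n : ℕ} {L K : Fin d → Fin n} (hL : Function.Injective L)
    (hK : StrictMono K) (h : Finset.image L Finset.univ = Finset.image K Finset.univ) :
    sortIm L = K := by
  rw [sortIm, dif_pos (card_im hL)]
  refine (Finset.orderEmbOfFin_unique (card_im hL) (f := K) ?_ hK).symm
  intro i
  rw [h]
  exact Finset.mem_image_of_mem _ (Finset.mem_univ i)

/-- If `m` is a homogeneous symmetric polynomial in `d` variables whose degree
is not divisible by `n`, then `∑_I m(ζ^I) = 0`, where the sum runs over all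
`d`-element subsets `I` of the `n`-th roots of `(-1)^{d+1}`. -/
theorem stmt13 (d n k : ℕ) (hn : 1 ≤ n) (m : MvPolynomial (Fin d) ℂ)
    (hhom : m.IsHomogeneous k) (hsym : m.IsSymmetric) (hndvd : ¬ n ∣ k) :
    ∑ K ∈ Finset.univ.filter (fun K : Fin d → Fin n => StrictMono K),
      MvPolynomial.eval (rootTup d n K) m = 0 := by
  haveI : NeZero n := ⟨by omega⟩
  set ζ : ℂ := Complex.exp (2 * Real.pi * Complex.I / n) with hζ
  have hprim : IsPrimitiveRoot ζ n := by
    simpa [hζ, mul_comm] using Complex.isPrimitiveRoot_exp n (by omega)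
  have hζn : ζ ^ n = 1 := hprim.pow_eq_one
  have hmod : ∀ a : ℕ, ζ ^ (a % n) = ζ ^ a := by
    intro a
    conv_rhs => rw [← Nat.mod_add_div a n]
    rw [pow_add, pow_mul, hζn, one_pow, mul_one]
  have hadd1 : Function.Injective (fun x : Fin n => x + 1) :=
    fun a b h => by simpa using add_left_injective 1 h
  have hsub1 : Function.Injective (fun x : Fin n => x - 1) :=
    fun a b h => by rwa [sub_left_inj] at h
  set S := ∑ K ∈ Finset.univ.filter (fun K : Fin d → Fin n => StrictMono K),
      MvPolynomial.eval (rootTup d n K) m with hS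
  have key : S = ζ ^ k * S := by
    rw [hS, Finset.mul_sum]
    apply Finset.sum_nbij' (i := fun K => sortIm (fun i => K i - 1))
      (j := fun K => sortIm (fun i => K i + 1))
    · intro K hK
      simp only [Finset.mem_filter, Finset.mem_univ, true_and] at hK ⊢
      exact sortIm_strictMono (hsub1.comp hK.injective)
    · intro K hK
      simp only [Finset.mem_filter, Finset.mem_univ, true_and] at hK ⊢
      exact sortIm_strictMono (hadd1.comp hK.injective)
    · intro K hK
      simp only [Finset.mem_filter, Finset.mem_univ, true_and] at hK
      have h1 : Function.Injective fun i => K i - 1 := hsub1.comp hK.injective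
      apply sortIm_eq (hadd1.comp ((sortIm_strictMono h1).injective)) hK
      rw [← Finset.image_image, sortIm_image h1, Finset.image_image]
      simp [Function.comp_def, sub_add_cancel]
    · intro K hK
      simp only [Finset.mem_filter, Finset.mem_univ, true_and] at hK
      have h1 : Function.Injective fun i => K i + 1 := hadd1.comp hK.injective
      apply sortIm_eq (hsub1.comp ((sortIm_strictMono h1).injective)) hK
      rw [← Finset.image_image, sortIm_image h1, Finset.image_image]
      simp [Function.comp_def, add_sub_cancel_right]
    · intro K hK
      simp only [Finset.mem_filter, Finset.mem_univ, true_and] at hK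
      have h1 : Function.Injective fun i => K i - 1 := hsub1.comp hK.injective
      have e1 : MvPolynomial.eval (rootTup d n (sortIm (fun i => K i - 1))) m
          = MvPolynomial.eval (rootTup d n (fun i => K i - 1)) m :=
        eval_range_eq hsym h1 (sortIm_strictMono h1).injective (sortIm_image h1).symm
      have e2 : rootTup d n K = ζ • rootTup d n (fun i => K i - 1) := by
        funext i
        have ha : (K i : ℕ) = (((K i - 1 : Fin n) : ℕ) + 1 % n) % n := by
          conv_lhs => rw [← sub_add_cancel (K i) 1]
          rw [Fin.add_def, Fin.val_one']
        simp only [rootTup, Pi.smul_apply, smul_eq_mul, ← hζ]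
        rw [ha, hmod (((K i - 1 : Fin n) : ℕ) + 1 % n), pow_add, hmod 1, pow_one]
        ring
      rw [e2, eval_smul_homog hhom, e1]
  have hζk : ζ ^ k ≠ 1 := fun h => hndvd (hprim.pow_eq_one_iff_dvd k |>.mp h)
  have h0 : (ζ ^ k - 1) * S = 0 := by rw [sub_mul, one_mul, ← key, sub_self]
  rcases mul_eq_zero.mp h0 with h | h
  · exact absurd (sub_eq_zero.mp h) hζk
  · exact h
end
end

section
/- In the ring Λ = ℂ[X_1,...,X_d]/(Y_{c+1},...,Y_{n-1}) (with n = c+d, Y_k the k×k determinant det(X_{i-j+1}) with X_0=1, X_k=0 for k∉{0,...,d}), the element Y_n satisfies Y_n = (-1)^{d+1} X_d Y_c. Equivalently, as polynomials one has Y_n ≡ (-1)^{d+1} X_d Y_c modulo the ideal (Y_{c+1},...,Y_{n-1}). -/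
noncomputable section

/-- The generator `X_m` of `ℂ[X_1,…,X_d]`, with the conventions `X_0 = 1` and
`X_m = 0` for `m < 0` or `m > d`. -/
def Xent (d : ℕ) (m : ℤ) : MvPolynomial (Fin d) ℂ :=
  if m = 0 then 1
  else if h : 1 ≤ m ∧ m ≤ d then MvPolynomial.X ⟨(m - 1).toNat, by omega⟩ else 0

/-- `Y_k = det(X_{i-j+1})_{i,j=1..k}`. -/
def Ypoly (d k : ℕ) : MvPolynomial (Fin d) ℂ :=
  Matrix.det (Matrix.of fun i j : Fin k => Xent d ((i : ℤ) - j + 1))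

lemma Xent_neg (d : ℕ) (m : ℤ) (h : m < 0) : Xent d m = 0 := by
  unfold Xent
  rw [if_neg (by omega), dif_neg (by omega)]

lemma Xent_big (d : ℕ) (m : ℤ) (h : (d : ℤ) < m) : Xent d m = 0 := by
  unfold Xent
  rw [if_neg (by omega), dif_neg (by omega)]

lemma minor_det (d j : ℕ) (i : Fin (j + 1)) :
    Matrix.det (Matrix.of fun r c : Fin j =>
      Xent d ((i.succAbove r : ℤ) - (c.succ : Fin (j+1)) + 1)) = Ypoly d (j - i) := by
  have hi : (i : ℕ) ≤ j := Fin.is_le i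
  have hsum : (i : ℕ) + (j - (i : ℕ)) = j := by omega
  set A : Matrix (Fin (i : ℕ)) (Fin (i : ℕ)) (MvPolynomial (Fin d) ℂ) :=
    Matrix.of fun a a' => Xent d ((a : ℤ) - a') with hA
  set D : Matrix (Fin (j - (i : ℕ))) (Fin (j - (i : ℕ))) (MvPolynomial (Fin d) ℂ) :=
    Matrix.of fun b b' => Xent d ((b : ℤ) - b' + 1) with hD
  set C : Matrix (Fin (j - (i : ℕ))) (Fin (i : ℕ)) (MvPolynomial (Fin d) ℂ) :=
    Matrix.of fun b a => Xent d ((i : ℤ) + b + 1 - a) with hC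
  set e : Fin (i : ℕ) ⊕ Fin (j - (i : ℕ)) ≃ Fin j := finSumFinEquiv.trans (finCongr hsum) with he
  have key : (Matrix.of fun r c : Fin j =>
      Xent d ((i.succAbove r : ℤ) - (c.succ : Fin (j+1)) + 1)).submatrix e e
      = Matrix.fromBlocks A 0 C D := by
    refine Matrix.ext fun rr cc => ?_
    have hvl : ∀ a : Fin (i:ℕ), ((e (Sum.inl a) : Fin j) : ℕ) = (a : ℕ) := by
      intro a; simp [he, finSumFinEquiv]
    have hvr : ∀ b : Fin (j - (i:ℕ)), ((e (Sum.inr b) : Fin j) : ℕ) = (i:ℕ) + b := by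
      intro b; simp [he, finSumFinEquiv]
    have hsucc : ∀ r : Fin j, ((i.succAbove r : Fin (j+1)) : ℕ) =
        if (r : ℕ) < (i : ℕ) then (r : ℕ) else (r : ℕ) + 1 := by
      intro r
      rw [Fin.succAbove]
      split_ifs with h1 h2 h3
      · simp
      · exact absurd (by simpa [Fin.lt_def] using h1) h2
      · exact absurd (by simpa [Fin.lt_def] using h3) h1
      · simp
    rcases rr with a | b <;> rcases cc with a' | b' <;>
      simp only [Matrix.submatrix_apply, Matrix.of_apply, Matrix.fromBlocks_apply₁₁,
        Matrix.fromBlocks_apply₁₂, Matrix.fromBlocks_apply₂₁, Matrix.fromBlocks_apply₂₂,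
        Matrix.zero_apply]
    · -- inl inl
      have h3 := hsucc (e (Sum.inl a))
      rw [hvl a, if_pos a.isLt] at h3
      have : ((i.succAbove (e (Sum.inl a)) : Fin (j+1)) : ℤ)
          - (((e (Sum.inl a')).succ : Fin (j+1)) : ℤ) + 1 = (a : ℤ) - a' := by
        have h4 : (((e (Sum.inl a')).succ : Fin (j+1)) : ℕ) = (e (Sum.inl a') : ℕ) + 1 := by simp
        push_cast [h3, h4, hvl]; omega
      rw [this, hA]; rfl
    · -- inl inr : zero
      have h3 := hsucc (e (Sum.inl a))
      rw [hvl a, if_pos a.isLt] at h3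
      apply Xent_neg
      have h4 : (((e (Sum.inr b')).succ : Fin (j+1)) : ℕ) = (e (Sum.inr b') : ℕ) + 1 := by simp
      have ha : (a : ℕ) < (i : ℕ) := a.isLt
      push_cast [h3, h4, hvl, hvr]; omega
    · -- inr inl
      have h3 := hsucc (e (Sum.inr b))
      rw [hvr b, if_neg (by omega)] at h3
      have : ((i.succAbove (e (Sum.inr b)) : Fin (j+1)) : ℤ)
          - (((e (Sum.inl a')).succ : Fin (j+1)) : ℤ) + 1 = (i : ℤ) + b + 1 - a' := by
        have h4 : (((e (Sum.inl a')).succ : Fin (j+1)) : ℕ) = (e (Sum.inl a') : ℕ) + 1 := by simp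
        push_cast [h3, h4, hvl, hvr]; omega
      rw [this, hC]; rfl
    · -- inr inr
      have h3 := hsucc (e (Sum.inr b))
      rw [hvr b, if_neg (by omega)] at h3
      have : ((i.succAbove (e (Sum.inr b)) : Fin (j+1)) : ℤ)
          - (((e (Sum.inr b')).succ : Fin (j+1)) : ℤ) + 1 = (b : ℤ) - b' + 1 := by
        have h4 : (((e (Sum.inr b')).succ : Fin (j+1)) : ℕ) = (e (Sum.inr b') : ℕ) + 1 := by simp
        push_cast [h3, h4, hvr]; omega
      rw [this, hD]; rfl
  rw [← Matrix.det_submatrix_equiv_self e, key, Matrix.det_fromBlocks_zero₁₂]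
  have hAdet : A.det = 1 := by
    rw [Matrix.det_of_lowerTriangular A]
    · apply Finset.prod_eq_one
      intro a _
      show Xent d ((a : ℤ) - a) = 1
      rw [sub_self]
      unfold Xent
      rw [if_pos rfl]
    · intro a a' h
      have hlt : a < a' := h
      have hlt' : (a : ℕ) < (a' : ℕ) := Fin.lt_def.mp hlt
      exact Xent_neg _ _ (by omega)
  rw [hAdet, one_mul]
  rfl

lemma Yrec (d j : ℕ) : Ypoly d (j + 1) =
    ∑ i : Fin (j + 1), (-1 : MvPolynomial (Fin d) ℂ) ^ (i : ℕ) *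
      (Xent d ((i : ℤ) + 1) * Ypoly d (j - (i : ℕ))) := by
  rw [Ypoly, Matrix.det_succ_column_zero]
  refine Finset.sum_congr rfl fun i _ => ?_
  rw [mul_assoc]
  congr 1
  have h0 : (Matrix.of fun i j : Fin (j+1) => Xent d ((i : ℤ) - j + 1)) i 0
      = Xent d ((i : ℤ) + 1) := by simp
  rw [h0]
  congr 1
  have hsub : (Matrix.of fun i j : Fin (j+1) => Xent d ((i : ℤ) - j + 1)).submatrix
      i.succAbove Fin.succ
      = Matrix.of fun r c : Fin j =>
          Xent d ((i.succAbove r : ℤ) - (c.succ : Fin (j+1)) + 1) := rfl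
  rw [hsub, minor_det d j i]

/-- In `Λ = ℂ[X_1,…,X_d]/(Y_{c+1},…,Y_{n-1})` one has `Y_n = (-1)^{d+1} X_d Y_c`;
equivalently, `Y_n ≡ (-1)^{d+1} X_d Y_c` modulo the ideal `(Y_{c+1},…,Y_{n-1})`. -/
theorem stmt14 (c d n : ℕ) (hc : 1 ≤ c) (hd : 1 ≤ d) (hn : n = c + d) :
    Ypoly d n - (-1 : MvPolynomial (Fin d) ℂ) ^ (d + 1) *
        (MvPolynomial.X ⟨d - 1, by omega⟩ * Ypoly d c) ∈
      Ideal.span ((Finset.Icc (c + 1) (n - 1)).image (Ypoly d) : Set (MvPolynomial (Fin d) ℂ)) := by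
  have hn1 : n = (n - 1) + 1 := by omega
  have hrec : Ypoly d n = ∑ i ∈ Finset.range n, (-1 : MvPolynomial (Fin d) ℂ) ^ i *
      (Xent d ((i : ℤ) + 1) * Ypoly d (n - 1 - i)) := by
    conv_lhs => rw [hn1]
    rw [Yrec d (n-1),
      Fin.sum_univ_eq_sum_range (fun i => (-1 : MvPolynomial (Fin d) ℂ) ^ i *
        (Xent d ((i : ℤ) + 1) * Ypoly d (n - 1 - i))) (n - 1 + 1), ← hn1]
  have hmem : d - 1 ∈ Finset.range n := by simp; omega
  rw [← Finset.add_sum_erase _ _ hmem] at hrec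
  have hmain : (-1 : MvPolynomial (Fin d) ℂ) ^ (d - 1) *
      (Xent d (((d - 1 : ℕ) : ℤ) + 1) * Ypoly d (n - 1 - (d - 1)))
      = (-1 : MvPolynomial (Fin d) ℂ) ^ (d + 1) *
        (MvPolynomial.X ⟨d - 1, by omega⟩ * Ypoly d c) := by
    have h1 : (((d - 1 : ℕ) : ℤ)) + 1 = (d : ℤ) := by omega
    have h2 : n - 1 - (d - 1) = c := by omega
    have h3 : Xent d (d : ℤ) = MvPolynomial.X ⟨d - 1, by omega⟩ := by
      unfold Xent
      rw [if_neg (by omega), dif_pos (by exact ⟨by omega, le_refl _⟩)]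
      have hv : ((d : ℤ) - 1).toNat = d - 1 := by omega
      simp only [hv]
    have h4 : (-1 : MvPolynomial (Fin d) ℂ) ^ (d - 1) = (-1) ^ (d + 1) := by
      have : d + 1 = (d - 1) + 2 := by omega
      rw [this, pow_add]
      ring
    rw [h1, h2, h3, h4]
  rw [hrec, hmain, add_sub_cancel_left]
  apply Ideal.sum_mem
  intro i hi
  simp only [Finset.mem_erase, Finset.mem_range] at hi
  obtain ⟨hne, hilt⟩ := hi
  by_cases hid : i < d
  · have hgen : Ypoly d (n - 1 - i) ∈
        ((Finset.Icc (c + 1) (n - 1)).image (Ypoly d) : Set (MvPolynomial (Fin d) ℂ)) := by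
      simp only [Finset.coe_image, Set.mem_image, Finset.mem_coe, Finset.mem_Icc]
      exact ⟨n - 1 - i, by omega, rfl⟩
    rw [← mul_assoc]
    exact Ideal.mul_mem_left _ _ (Ideal.subset_span hgen)
  · have : Xent d ((i : ℤ) + 1) = 0 := Xent_big d _ (by omega)
    rw [this, zero_mul, mul_zero]
    exact Ideal.zero_mem _
end
end
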